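/- arXiv:1810.08473 — 3 statements merged into one kernel-verified Lean document; each statement's English description precedes it below -/
import Mathlib

section
/- Let G = (V,E) be a finite undirected graph with n nodes, let γ > 0, and let H be the CPM quality function with resolution parameter γ. If P* is an optimal partition of V (i.e. H(P*) ≥ H(P) for every partition P of V), then there exists a non-decreasing move sequence P_0, ..., P_τ with P_0 the singleton partition {{v} : v ∈ V}, P_τ = P*, and τ = n − |P*|. -/
open Finset

variable {V : Type*}

/-- `eBetween G S T` is the number of adjacent pairs `(u, v)` with `u ∈ S` and `v ∈ T`.
For disjoint `S` and `T` this is the number of edges between `S` and `T`. -/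
noncomputable def eBetween (G : SimpleGraph V) [DecidableRel G.Adj] (S T : Finset V) : ℝ :=
  ∑ u ∈ S, ∑ v ∈ T, if G.Adj u v then (1 : ℝ) else 0

/-- The Constant Potts Model quality function with resolution parameter `γ`:
`H(P) = Σ_{C ∈ P} [E(C,C) − γ·|C|(|C|−1)/2]`, where `E(C,C) = eBetween G C C / 2` is the
number of edges inside `C`. -/
noncomputable def cpmQuality (G : SimpleGraph V) [DecidableRel G.Adj] (γ : ℝ)
    (P : Finset (Finset V)) : ℝ :=
  ∑ C ∈ P, (eBetween G C C / 2 - γ * (C.card : ℝ) * ((C.card : ℝ) - 1) / 2)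

/-- `P` is a partition of `V` into nonempty communities. -/
def IsPartition [Fintype V] (P : Finset (Finset V)) : Prop :=
  (∀ C ∈ P, C.Nonempty) ∧ ∀ v : V, ∃! C, C ∈ P ∧ v ∈ C

/-- The partition `P(v ↦ C)` obtained from `P` by moving node `v` into community `C`,
discarding any community that becomes empty. -/
def movePartition [DecidableEq V] (P : Finset (Finset V)) (v : V) (C : Finset V) :
    Finset (Finset V) :=
  insert (insert v C) (((P.erase C).image fun B => B.erase v).filter fun B => B.Nonempty)

set_option linter.unusedSectionVars false
set_option linter.unusedVariables false

section EB
variable (G : SimpleGraph V) [DecidableRel G.Adj] [DecidableEq V]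

lemma eBetween_comm (S T : Finset V) : eBetween G S T = eBetween G T S := by
  unfold eBetween
  rw [Finset.sum_comm]
  exact Finset.sum_congr rfl fun u _ => Finset.sum_congr rfl fun v _ => by
    simp [G.adj_comm]

lemma eBetween_self_singleton (v : V) : eBetween G {v} {v} = 0 := by
  simp [eBetween, Finset.filter_singleton, G.irrefl]

lemma eBetween_insert_left {v : V} {S : Finset V} (h : v ∉ S) (T : Finset V) :
    eBetween G (insert v S) T = eBetween G {v} T + eBetween G S T := by
  unfold eBetween
  rw [Finset.sum_insert h, Finset.sum_singleton]

lemma eBetween_insert_right {v : V} {T : Finset V} (h : v ∉ T) (S : Finset V) :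
    eBetween G S (insert v T) = eBetween G S {v} + eBetween G S T := by
  rw [eBetween_comm, eBetween_insert_left G h, eBetween_comm G T S, eBetween_comm G {v} S]

lemma eBetween_union_left {S S' : Finset V} (h : Disjoint S S') (T : Finset V) :
    eBetween G (S ∪ S') T = eBetween G S T + eBetween G S' T := by
  unfold eBetween
  exact Finset.sum_union h

lemma eBetween_union_right {T T' : Finset V} (h : Disjoint T T') (S : Finset V) :
    eBetween G S (T ∪ T') = eBetween G S T + eBetween G S T' := by
  rw [eBetween_comm, eBetween_union_left G h, eBetween_comm G T S, eBetween_comm G T' S]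

lemma eBetween_sum_right (S T : Finset V) :
    eBetween G S T = ∑ v ∈ T, eBetween G S {v} := by
  unfold eBetween
  rw [Finset.sum_comm]
  exact Finset.sum_congr rfl fun v _ => by rw [Finset.sum_comm]; simp

lemma eBetween_nonneg (S T : Finset V) : 0 ≤ eBetween G S T := by
  unfold eBetween
  refine Finset.sum_nonneg fun u _ => Finset.sum_nonneg fun v _ => by positivity

end EB

section Part
variable [Fintype V] [DecidableEq V]

lemma part_unique {P : Finset (Finset V)} (hP : IsPartition P) {B B' : Finset V}
    (hB : B ∈ P) (hB' : B' ∈ P) {v : V} (h1 : v ∈ B) (h2 : v ∈ B') : B = B' :=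
  ((hP.2 v).unique ⟨hB, h1⟩ ⟨hB', h2⟩)

variable (G : SimpleGraph V) [DecidableRel G.Adj] {γ : ℝ}

/-- The split partition is a partition. -/
lemma isPartition_split {Pstar : Finset (Finset V)} (hPstar : IsPartition Pstar)
    {C D : Finset V} (hC : C ∈ Pstar) (hDC : D ⊆ C) (hD : D.Nonempty)
    (hCD : (C \ D).Nonempty) :
    IsPartition (insert D (insert (C \ D) (Pstar.erase C))) := by
  constructor
  · intro B hB
    rcases Finset.mem_insert.1 hB with rfl | hB
    · exact hD
    rcases Finset.mem_insert.1 hB with rfl | hB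
    · exact hCD
    · exact hPstar.1 B (Finset.mem_of_mem_erase hB)
  · intro w
    obtain ⟨B, ⟨hBmem, hwB⟩, hBuniq⟩ := hPstar.2 w
    by_cases hBC : B = C
    · by_cases hwD : w ∈ D
      · refine ⟨D, ⟨Finset.mem_insert_self _ _, hwD⟩, ?_⟩
        rintro Y ⟨hY, hwY⟩
        rcases Finset.mem_insert.1 hY with rfl | hY
        · rfl
        rcases Finset.mem_insert.1 hY with rfl | hY
        · exact absurd hwY (by simp [hwD])
        · exact absurd (hBC ▸ hBuniq Y ⟨Finset.mem_of_mem_erase hY, hwY⟩)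
            (Finset.ne_of_mem_erase hY)
      · refine ⟨C \ D, ⟨Finset.mem_insert_of_mem (Finset.mem_insert_self _ _),
          Finset.mem_sdiff.2 ⟨hBC ▸ hwB, hwD⟩⟩, ?_⟩
        rintro Y ⟨hY, hwY⟩
        rcases Finset.mem_insert.1 hY with rfl | hY
        · exact absurd hwY hwD
        rcases Finset.mem_insert.1 hY with rfl | hY
        · rfl
        · exact absurd (hBC ▸ hBuniq Y ⟨Finset.mem_of_mem_erase hY, hwY⟩)
            (Finset.ne_of_mem_erase hY)
    · refine ⟨B, ⟨Finset.mem_insert_of_mem (Finset.mem_insert_of_mem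
        (Finset.mem_erase.2 ⟨hBC, hBmem⟩)), hwB⟩, ?_⟩
      rintro Y ⟨hY, hwY⟩
      rcases Finset.mem_insert.1 hY with rfl | hY
      · exact absurd (hBuniq C ⟨hC, hDC hwY⟩) (Ne.symm hBC)
      rcases Finset.mem_insert.1 hY with rfl | hY
      · exact absurd (hBuniq C ⟨hC, (Finset.mem_sdiff.1 hwY).1⟩) (Ne.symm hBC)
      · exact hBuniq Y ⟨Finset.mem_of_mem_erase hY, hwY⟩

/-- The cut condition, from optimality. -/
lemma cut_lemma {Pstar : Finset (Finset V)} (hPstar : IsPartition Pstar)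
    (hopt : ∀ P : Finset (Finset V), IsPartition P →
      cpmQuality G γ P ≤ cpmQuality G γ Pstar)
    {C D : Finset V} (hC : C ∈ Pstar) (hDC : D ⊆ C) (hD : D.Nonempty)
    (hCD : (C \ D).Nonempty) :
    γ * (D.card : ℝ) * ((C \ D).card : ℝ) ≤ eBetween G D (C \ D) := by
  set P' := insert D (insert (C \ D) (Pstar.erase C)) with hP'def
  have hDne : D ≠ C \ D := by
    obtain ⟨d, hd⟩ := hD
    intro h
    rw [h] at hd
    exact (Finset.mem_sdiff.1 hd).2 (h ▸ hd)
  have hDnotin : D ∉ Pstar.erase C := by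
    intro h
    obtain ⟨d, hd⟩ := hD
    exact (Finset.mem_erase.1 h).1
      (part_unique hPstar (Finset.mem_of_mem_erase h) hC hd (hDC hd))
  have hCDnotin : (C \ D) ∉ Pstar.erase C := by
    intro h
    obtain ⟨e, he⟩ := hCD
    exact (Finset.mem_erase.1 h).1 (part_unique hPstar (Finset.mem_of_mem_erase h) hC he
      (Finset.mem_sdiff.1 he).1)
  have hpart : IsPartition P' := isPartition_split hPstar hC hDC hD hCD
  have hle := hopt P' hpart
  have hsum : cpmQuality G γ P' =
      (eBetween G D D / 2 - γ * (D.card : ℝ) * ((D.card : ℝ) - 1) / 2) +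
      ((eBetween G (C \ D) (C \ D) / 2 -
        γ * ((C \ D).card : ℝ) * (((C \ D).card : ℝ) - 1) / 2) +
       (cpmQuality G γ Pstar -
        (eBetween G C C / 2 - γ * (C.card : ℝ) * ((C.card : ℝ) - 1) / 2))) := by
    unfold cpmQuality
    rw [Finset.sum_insert (by
      simp only [Finset.mem_insert]
      push_neg
      exact ⟨hDne, hDnotin⟩), Finset.sum_insert hCDnotin]
    have := Finset.add_sum_erase Pstar
      (fun C => eBetween G C C / 2 - γ * (C.card : ℝ) * ((C.card : ℝ) - 1) / 2) hC
    linarith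
  -- decompose E(C,C) and |C|
  have hunion : D ∪ (C \ D) = C := Finset.union_sdiff_of_subset hDC
  have hdisj : Disjoint D (C \ D) := Finset.disjoint_sdiff
  have hEC : eBetween G C C = eBetween G D D + eBetween G (C \ D) (C \ D) +
      2 * eBetween G D (C \ D) := by
    have h1 : eBetween G C C = eBetween G (D ∪ (C \ D)) (D ∪ (C \ D)) := by rw [hunion]
    rw [h1, eBetween_union_left G hdisj, eBetween_union_right G hdisj,
      eBetween_union_right G hdisj, eBetween_comm G (C \ D) D]
    ring
  have hcard : (C.card : ℝ) = (D.card : ℝ) + ((C \ D).card : ℝ) := by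
    have h1 : C.card = (D ∪ (C \ D)).card := by rw [hunion]
    rw [h1, Finset.card_union_of_disjoint hdisj]
    push_cast
    ring
  rw [hsum, hEC, hcard] at hle
  nlinarith [hle]

end Part

section Step
variable [Fintype V] [DecidableEq V] (G : SimpleGraph V) [DecidableRel G.Adj] {γ : ℝ}

lemma exists_good_vertex {Pstar : Finset (Finset V)} (hPstar : IsPartition Pstar)
    (hopt : ∀ P : Finset (Finset V), IsPartition P →
      cpmQuality G γ P ≤ cpmQuality G γ Pstar)
    {C D : Finset V} (hC : C ∈ Pstar) (hDC : D ⊆ C) (hD : D.Nonempty)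
    (hCD : (C \ D).Nonempty) :
    ∃ v ∈ C \ D, γ * (D.card : ℝ) ≤ eBetween G {v} D := by
  by_contra hcon
  push_neg at hcon
  have hsum : eBetween G D (C \ D) = ∑ v ∈ C \ D, eBetween G D {v} :=
    eBetween_sum_right G D (C \ D)
  have hlt : ∑ v ∈ C \ D, eBetween G D {v} <
      ∑ _v ∈ C \ D, γ * (D.card : ℝ) := by
    refine Finset.sum_lt_sum_of_nonempty hCD fun v hv => ?_
    rw [eBetween_comm]
    exact hcon v hv
  rw [Finset.sum_const, nsmul_eq_mul] at hlt
  have hcut := cut_lemma G hPstar hopt hC hDC hD hCD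
  rw [hsum] at hcut
  nlinarith [hcut, hlt]

lemma insert_merge_notin {Q : Finset (Finset V)} (hQ : IsPartition Q) {v : V}
    {D : Finset V} (hv : ({v} : Finset V) ∈ Q) (hD : D ∈ Q) (hvD : v ∉ D) :
    insert v D ∉ (Q.erase D).erase {v} := by
  intro h
  have hmem : insert v D ∈ Q := Finset.mem_of_mem_erase (Finset.mem_of_mem_erase h)
  have : insert v D = {v} := part_unique hQ hmem hv (Finset.mem_insert_self v D) (Finset.mem_singleton_self v)
  obtain ⟨d, hd⟩ := hQ.1 D hD
  have hdv : d ≠ v := fun h' => hvD (h' ▸ hd)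
  have : d ∈ ({v} : Finset V) := this ▸ Finset.mem_insert_of_mem hd
  exact hdv (Finset.mem_singleton.1 this)

lemma cpm_merge (hQpart : IsPartition Q) {v : V} {D : Finset V}
    (hv : ({v} : Finset V) ∈ Q) (hD : D ∈ Q) (hvD : v ∉ D) :
    cpmQuality G γ (insert (insert v D) ((Q.erase D).erase {v})) =
      cpmQuality G γ Q + (eBetween G {v} D - γ * (D.card : ℝ)) := by
  have hDne : D ≠ ({v} : Finset V) := fun h => hvD (h ▸ Finset.mem_singleton_self v)
  have hvQ : ({v} : Finset V) ∈ Q.erase D := Finset.mem_erase.2 ⟨Ne.symm hDne, hv⟩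
  have hnot := insert_merge_notin hQpart hv hD hvD
  unfold cpmQuality
  rw [Finset.sum_insert hnot]
  have h1 := Finset.add_sum_erase (Q.erase D)
    (fun C => eBetween G C C / 2 - γ * (C.card : ℝ) * ((C.card : ℝ) - 1) / 2) hvQ
  have h2 := Finset.add_sum_erase Q
    (fun C => eBetween G C C / 2 - γ * (C.card : ℝ) * ((C.card : ℝ) - 1) / 2) hD
  have hsing : eBetween G {v} {v} / 2 -
      γ * (({v} : Finset V).card : ℝ) * ((({v} : Finset V).card : ℝ) - 1) / 2 = 0 := by
    rw [eBetween_self_singleton]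
    simp
  have hE : eBetween G (insert v D) (insert v D) =
      eBetween G D D + 2 * eBetween G {v} D := by
    rw [eBetween_insert_left G hvD, eBetween_insert_right G hvD,
      eBetween_insert_right G hvD, eBetween_self_singleton, eBetween_comm G D {v}]
    ring
  have hcard : ((insert v D).card : ℝ) = (D.card : ℝ) + 1 := by
    rw [Finset.card_insert_of_notMem hvD]
    push_cast
    ring
  rw [hE, hcard]
  linarith [h1, h2, hsing]

end Step

section Move
variable [Fintype V] [DecidableEq V]

lemma move_singleton_eq {Q : Finset (Finset V)} (hQ : IsPartition Q) {v : V}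
    {D : Finset V} (hv : ({v} : Finset V) ∈ Q) (hD : D ∈ Q) (hvD : v ∉ D) :
    movePartition Q v D = insert (insert v D) ((Q.erase D).erase {v}) := by
  unfold movePartition
  congr 1
  ext X
  simp only [Finset.mem_filter, Finset.mem_image, Finset.mem_erase]
  constructor
  · rintro ⟨⟨B, hB, rfl⟩, hXne⟩
    obtain ⟨hBne, hBQ⟩ := hB
    by_cases hvB : v ∈ B
    · have : B = {v} := part_unique hQ hBQ hv hvB (Finset.mem_singleton_self v)
      subst this
      simp at hXne
    · rw [Finset.erase_eq_of_notMem hvB]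
      refine ⟨?_, hBne, hBQ⟩
      intro h
      exact hvB (h ▸ Finset.mem_singleton_self v)
  · rintro ⟨hXv, hXD, hXQ⟩
    have hvX : v ∉ X := fun h =>
      hXv (part_unique hQ hXQ hv h (Finset.mem_singleton_self v))
    exact ⟨⟨X, ⟨hXD, hXQ⟩, Finset.erase_eq_of_notMem hvX⟩, hQ.1 X hXQ⟩

lemma isPartition_merge {Q : Finset (Finset V)} (hQ : IsPartition Q) {v : V}
    {D : Finset V} (hv : ({v} : Finset V) ∈ Q) (hD : D ∈ Q) (hvD : v ∉ D) :
    IsPartition (insert (insert v D) ((Q.erase D).erase {v})) := by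
  constructor
  · intro B hB
    rcases Finset.mem_insert.1 hB with rfl | hB
    · exact Finset.insert_nonempty _ _
    · exact hQ.1 B (Finset.mem_of_mem_erase (Finset.mem_of_mem_erase hB))
  · intro w
    obtain ⟨B, ⟨hBmem, hwB⟩, hBuniq⟩ := hQ.2 w
    have key : ∀ Y ∈ Q, Y ≠ D → Y ≠ ({v} : Finset V) →
        Y ∈ insert (insert v D) ((Q.erase D).erase {v}) := fun Y h1 h2 h3 =>
      Finset.mem_insert_of_mem (Finset.mem_erase.2 ⟨h3, Finset.mem_erase.2 ⟨h2, h1⟩⟩)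
    by_cases hcase : B = D ∨ B = ({v} : Finset V)
    · refine ⟨insert v D, ⟨Finset.mem_insert_self _ _, ?_⟩, ?_⟩
      · rcases hcase with rfl | rfl
        · exact Finset.mem_insert_of_mem hwB
        · rw [Finset.mem_singleton.1 hwB]
          exact Finset.mem_insert_self _ _
      · rintro Y ⟨hY, hwY⟩
        rcases Finset.mem_insert.1 hY with rfl | hY
        · rfl
        obtain ⟨hY1, hY2⟩ := Finset.mem_erase.1 hY
        obtain hY2' := Finset.mem_erase.1 hY2
        exfalso
        rcases hcase with rfl | rfl
        · exact hY2'.1 (hBuniq Y ⟨hY2'.2, hwY⟩)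
        · exact hY1 (hBuniq Y ⟨hY2'.2, hwY⟩)
    · push_neg at hcase
      refine ⟨B, ⟨key B hBmem hcase.1 hcase.2, hwB⟩, ?_⟩
      rintro Y ⟨hY, hwY⟩
      have hYor := Finset.mem_insert.1 hY
      rcases hYor with hY' | hY'
      · exfalso
        subst hY'
        rcases Finset.mem_insert.1 hwY with hwv | hwD
        · subst hwv
          exact hcase.2 (hBuniq ({w} : Finset V) ⟨hv, Finset.mem_singleton_self w⟩).symm
        · exact hcase.1 (hBuniq D ⟨hD, hwD⟩).symm
      · exact hBuniq Y ⟨Finset.mem_of_mem_erase (Finset.mem_of_mem_erase hY'), hwY⟩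

/-- The invariant: each community of `Pstar` hosts one block of `Q`, the rest singletons. -/
def MergeInv (Pstar Q : Finset (Finset V)) : Prop :=
  ∀ C ∈ Pstar, ∃ D ∈ Q, D ⊆ C ∧ ∀ u ∈ C, u ∉ D → ({u} : Finset V) ∈ Q

lemma inv_card_le {Pstar Q : Finset (Finset V)} (hPstar : IsPartition Pstar)
    (hQ : IsPartition Q) (hinv : MergeInv Pstar Q) : Pstar.card ≤ Q.card := by
  classical
  refine Finset.card_le_card_of_injOn
    (fun C => if h : C.Nonempty then ((hQ.2 h.choose).exists).choose else ∅) ?_ ?_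
  · intro C hC
    have h : C.Nonempty := hPstar.1 C hC
    simp only [dif_pos h]
    exact ((hQ.2 h.choose).exists).choose_spec.1
  · intro C1 h1 C2 h2 heq
    simp only [Finset.mem_coe] at h1 h2
    have hne1 : C1.Nonempty := hPstar.1 C1 h1
    have hne2 : C2.Nonempty := hPstar.1 C2 h2
    simp only [dif_pos hne1, dif_pos hne2] at heq
    set B1 := ((hQ.2 hne1.choose).exists).choose with hB1
    set B2 := ((hQ.2 hne2.choose).exists).choose with hB2
    obtain ⟨hB1Q, hv1B1⟩ := ((hQ.2 hne1.choose).exists).choose_spec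
    obtain ⟨hB2Q, hv2B2⟩ := ((hQ.2 hne2.choose).exists).choose_spec
    -- B1 ⊆ C1
    have hsub : ∀ (C : Finset V), C ∈ Pstar → ∀ (w : V), w ∈ C → ∀ B ∈ Q, w ∈ B → B ⊆ C := by
      intro C hC w hwC B hBQ hwB
      obtain ⟨E, hEQ, hEC, hEsing⟩ := hinv C hC
      by_cases hwE : w ∈ E
      · rw [part_unique hQ hBQ hEQ hwB hwE]
        exact hEC
      · have : ({w} : Finset V) ∈ Q := hEsing w hwC hwE
        rw [part_unique hQ hBQ this hwB (Finset.mem_singleton_self w)]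
        simpa using hwC
    have hB1C1 : B1 ⊆ C1 := hsub C1 h1 hne1.choose hne1.choose_spec B1 hB1Q hv1B1
    have hB2C2 : B2 ⊆ C2 := hsub C2 h2 hne2.choose hne2.choose_spec B2 hB2Q hv2B2
    rw [← heq] at hB2C2
    exact part_unique hPstar h1 h2 (hB1C1 hv1B1) (hB2C2 hv1B1)

end Move

section Main
variable [Fintype V] [DecidableEq V] (G : SimpleGraph V) [DecidableRel G.Adj] {γ : ℝ}

lemma main_ind (hγ : 0 < γ) (Pstar : Finset (Finset V)) (hPstar : IsPartition Pstar)
    (hopt : ∀ P : Finset (Finset V), IsPartition P →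
      cpmQuality G γ P ≤ cpmQuality G γ Pstar) :
    ∀ n : ℕ, ∀ Q : Finset (Finset V), Q.card ≤ n → IsPartition Q → MergeInv Pstar Q →
    ∃ Ps : ℕ → Finset (Finset V),
      Ps 0 = Q ∧ Ps (Q.card - Pstar.card) = Pstar ∧
      ∀ t < Q.card - Pstar.card,
        (∃ (v : V) (C : Finset V), C ∈ insert (∅ : Finset V) (Ps t) ∧
          Ps (t + 1) = movePartition (Ps t) v C) ∧
        cpmQuality G γ (Ps t) ≤ cpmQuality G γ (Ps (t + 1)) := by
  intro n
  induction n with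
  | zero =>
    intro Q hcard hQ hinv
    have hQempty : Q = ∅ := Finset.card_eq_zero.1 (Nat.le_zero.1 hcard)
    have hPempty : Pstar = ∅ := by
      by_contra h
      obtain ⟨C, hC⟩ := Finset.nonempty_iff_ne_empty.2 h
      obtain ⟨D, hDQ, -⟩ := hinv C hC
      simp [hQempty] at hDQ
    refine ⟨fun _ => Q, rfl, ?_, ?_⟩
    · simp [hQempty, hPempty]
    · intro t ht
      simp [hQempty, hPempty] at ht
  | succ n ih =>
    intro Q hcard hQ hinv
    by_cases hall : ∀ C ∈ Pstar, C ∈ Q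
    · have hQP : Q = Pstar := by
        apply Finset.Subset.antisymm
        · intro B hB
          obtain ⟨b, hb⟩ := hQ.1 B hB
          obtain ⟨C, ⟨hCP, hbC⟩⟩ := (hPstar.2 b).exists
          rwa [part_unique hQ hB (hall C hCP) hb hbC]
        · intro C hC
          exact hall C hC
      refine ⟨fun _ => Q, rfl, ?_, ?_⟩
      · simp [hQP]
      · intro t ht
        rw [hQP, Nat.sub_self] at ht
        exact absurd ht (Nat.not_lt_zero t)
    · push_neg at hall
      obtain ⟨C, hCP, hCQ⟩ := hall
      obtain ⟨D, hDQ, hDC, hsing⟩ := hinv C hCP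
      have hD : D.Nonempty := hQ.1 D hDQ
      have hDneC : D ≠ C := fun h => hCQ (h ▸ hDQ)
      have hCD : (C \ D).Nonempty := by
        rw [Finset.sdiff_nonempty]
        intro h
        exact hDneC (Finset.Subset.antisymm hDC h)
      obtain ⟨v, hvCD, hgain⟩ := exists_good_vertex G hPstar hopt hCP hDC hD hCD
      obtain ⟨hvC, hvD⟩ := Finset.mem_sdiff.1 hvCD
      have hvQ : ({v} : Finset V) ∈ Q := hsing v hvC hvD
      set Q' := insert (insert v D) ((Q.erase D).erase {v}) with hQ'def
      have hQ' : IsPartition Q' := isPartition_merge hQ hvQ hDQ hvD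
      have hDnev : D ≠ ({v} : Finset V) := fun h => hvD (h ▸ Finset.mem_singleton_self v)
      have hinv' : MergeInv Pstar Q' := by
        intro C' hC'
        by_cases hCC : C' = C
        · subst hCC
          refine ⟨insert v D, Finset.mem_insert_self _ _,
            Finset.insert_subset hvC hDC, ?_⟩
          intro u huC hunotin
          have huv : u ≠ v := fun h => hunotin (h ▸ Finset.mem_insert_self v D)
          have huD : u ∉ D := fun h => hunotin (Finset.mem_insert_of_mem h)
          have huQ : ({u} : Finset V) ∈ Q := hsing u huC huD
          refine Finset.mem_insert_of_mem (Finset.mem_erase.2 ⟨?_, Finset.mem_erase.2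
            ⟨?_, huQ⟩⟩)
          · intro h
            exact huv (Finset.singleton_injective h)
          · intro h
            exact huD (h ▸ Finset.mem_singleton_self u)
        · obtain ⟨D', hD'Q, hD'C, hsing'⟩ := hinv C' hC'
          have hD' : D'.Nonempty := hQ.1 D' hD'Q
          have hD'neD : D' ≠ D := by
            intro h
            obtain ⟨d, hd⟩ := hD'
            exact hCC (part_unique hPstar hC' hCP (hD'C hd) (hDC (h ▸ hd)))
          have hD'nev : D' ≠ ({v} : Finset V) := by
            intro h
            have : v ∈ D' := h ▸ Finset.mem_singleton_self v
            exact hCC (part_unique hPstar hC' hCP (hD'C this) hvC)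
          refine ⟨D', Finset.mem_insert_of_mem (Finset.mem_erase.2 ⟨hD'nev,
            Finset.mem_erase.2 ⟨hD'neD, hD'Q⟩⟩), hD'C, ?_⟩
          intro u huC' huD'
          have huQ : ({u} : Finset V) ∈ Q := hsing' u huC' huD'
          have huv : u ≠ v := by
            intro h
            exact hCC (part_unique hPstar hC' hCP (h ▸ huC') hvC)
          have huneD : ({u} : Finset V) ≠ D := by
            intro h
            exact hCC (part_unique hPstar hC' hCP huC' (hDC (h ▸ Finset.mem_singleton_self u)))
          refine Finset.mem_insert_of_mem (Finset.mem_erase.2 ⟨?_, Finset.mem_erase.2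
            ⟨huneD, huQ⟩⟩)
          intro h
          exact huv (Finset.singleton_injective h)
      have hvQerase : ({v} : Finset V) ∈ Q.erase D := Finset.mem_erase.2 ⟨Ne.symm hDnev, hvQ⟩
      have hnot : insert v D ∉ (Q.erase D).erase {v} := insert_merge_notin hQ hvQ hDQ hvD
      have h2le : 2 ≤ Q.card := by
        have : ({D, ({v} : Finset V)} : Finset (Finset V)) ⊆ Q := by
          intro X hX
          rcases Finset.mem_insert.1 hX with rfl | hX
          · exact hDQ
          · rw [Finset.mem_singleton.1 hX]
            exact hvQ
        have hcard2 : ({D, ({v} : Finset V)} : Finset (Finset V)).card = 2 := by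
          rw [Finset.card_insert_of_notMem (by simpa using hDnev), Finset.card_singleton]
        calc 2 = ({D, ({v} : Finset V)} : Finset (Finset V)).card := hcard2.symm
        _ ≤ Q.card := Finset.card_le_card this
      have hcardQ' : Q'.card = Q.card - 1 := by
        rw [hQ'def, Finset.card_insert_of_notMem hnot,
          Finset.card_erase_of_mem hvQerase, Finset.card_erase_of_mem hDQ]
        omega
      obtain ⟨Ps', h0', hτ', hstep'⟩ := ih Q' (by omega) hQ' hinv'
      have hPle : Pstar.card ≤ Q'.card := inv_card_le hPstar hQ' hinv'
      have hτeq : Q.card - Pstar.card = (Q'.card - Pstar.card) + 1 := by omega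
      refine ⟨fun t => if t = 0 then Q else Ps' (t - 1), by simp, ?_, ?_⟩
      · rw [hτeq]
        simp only [Nat.succ_ne_zero, if_false, Nat.add_sub_cancel]
        exact hτ'
      · intro t ht
        by_cases ht0 : t = 0
        · subst ht0
          simp only [reduceIte, Nat.sub_self, Nat.one_ne_zero, if_false]
          rw [h0']
          constructor
          · exact ⟨v, D, Finset.mem_insert_of_mem hDQ,
              (move_singleton_eq hQ hvQ hDQ hvD).symm⟩
          · have := cpm_merge G (γ := γ) hQ hvQ hDQ hvD
            rw [← hQ'def] at this
            have hif : (if 0 + 1 = 0 then Q else Q') = Q' := by norm_num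
            rw [hif, this]
            linarith [hgain]
        · have ht1 : 1 ≤ t := Nat.one_le_iff_ne_zero.2 ht0
          have htlt : t - 1 < Q'.card - Pstar.card := by omega
          have := hstep' (t - 1) htlt
          simp only [if_neg ht0, if_neg (by omega : ¬ t + 1 = 0)] at *
          have e1 : t - 1 + 1 = t := by omega
          have e2 : t + 1 - 1 = t := by omega
          rw [e1] at this
          rw [e2]
          exact this

end Main

/-- **Theorem (reachability of optimal partitions by non-decreasing move sequences).**
If `P*` is an optimal partition for the CPM quality function with resolution `γ > 0`, then
there is a non-decreasing move sequence `P_0, …, P_τ` with `P_0` the singleton partition,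
`P_τ = P*` and `τ = n − |P*|`. -/
theorem optimal_reachable_by_nondecreasing_move_sequence
    [Fintype V] [DecidableEq V] (G : SimpleGraph V) [DecidableRel G.Adj]
    (γ : ℝ) (hγ : 0 < γ)
    (Pstar : Finset (Finset V)) (hPstar : IsPartition Pstar)
    (hopt : ∀ P : Finset (Finset V), IsPartition P →
      cpmQuality G γ P ≤ cpmQuality G γ Pstar) :
    ∃ (τ : ℕ) (Ps : ℕ → Finset (Finset V)),
      τ = Fintype.card V - Pstar.card ∧
      Ps 0 = Finset.univ.image (fun v : V => ({v} : Finset V)) ∧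
      Ps τ = Pstar ∧
      ∀ t < τ,
        (∃ (v : V) (C : Finset V), C ∈ insert (∅ : Finset V) (Ps t) ∧
          Ps (t + 1) = movePartition (Ps t) v C) ∧
        cpmQuality G γ (Ps t) ≤ cpmQuality G γ (Ps (t + 1)) := by
  classical
  set Q0 : Finset (Finset V) := Finset.univ.image (fun v : V => ({v} : Finset V)) with hQ0def
  have hQ0card : Q0.card = Fintype.card V := by
    rw [hQ0def, Finset.card_image_of_injective _ Finset.singleton_injective,
      Finset.card_univ]
  have hQ0part : IsPartition Q0 := by
    constructor
    · intro B hB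
      obtain ⟨u, -, rfl⟩ := Finset.mem_image.1 hB
      exact Finset.singleton_nonempty u
    · intro w
      refine ⟨{w}, ⟨Finset.mem_image.2 ⟨w, Finset.mem_univ w, rfl⟩,
        Finset.mem_singleton_self w⟩, ?_⟩
      rintro Y ⟨hY, hwY⟩
      obtain ⟨u, -, rfl⟩ := Finset.mem_image.1 hY
      rw [Finset.mem_singleton.1 hwY]
  have hinv0 : MergeInv Pstar Q0 := by
    intro C hC
    obtain ⟨c, hc⟩ := hPstar.1 C hC
    refine ⟨{c}, Finset.mem_image.2 ⟨c, Finset.mem_univ c, rfl⟩, by simpa using hc, ?_⟩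
    intro u _ _
    exact Finset.mem_image.2 ⟨u, Finset.mem_univ u, rfl⟩
  obtain ⟨Ps, h0, hτ, hstep⟩ :=
    main_ind G hγ Pstar hPstar hopt Q0.card Q0 le_rfl hQ0part hinv0
  exact ⟨Q0.card - Pstar.card, Ps, by rw [hQ0card], h0, hτ, hstep⟩
end

section
/- Let G = (V,E) be a finite undirected graph, let γ > 0, let P_1 and P_2 be partitions of V, and let P = P_1 ⊓ P_2 be their intersection. Then H(P_2) − H(P_1) = (1/2)·Σ_{S ~_{P_2} R, S ≠ R} [E(S,R) − γ·|S|·|R|] − (1/2)·Σ_{S ~_{P_1} R, S ≠ R} [E(S,R) − γ·|S|·|R|], where each sum runs over ordered pairs of distinct blocks S, R ∈ P and H denotes the CPM quality function with resolution parameter γ. -/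
open Finset
open scoped Classical

variable {V : Type*}

/-- The intersection `P₁ ⊓ P₂` of two partitions:
`{ C ∩ D : C ∈ P₁, D ∈ P₂, C ∩ D ≠ ∅ }`. -/
def interPartition [DecidableEq V] (P₁ P₂ : Finset (Finset V)) : Finset (Finset V) :=
  ((P₁ ×ˢ P₂).image fun p => p.1 ∩ p.2).filter fun S => S.Nonempty

set_option linter.unusedSectionVars false
set_option linter.unusedVariables false

section Aux
variable [Fintype V] [DecidableEq V]

lemma part_disjoint {P : Finset (Finset V)} (hP : IsPartition P)
    {C C' : Finset V} (hC : C ∈ P) (hC' : C' ∈ P) (hne : C ≠ C') : Disjoint C C' := by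
  rw [Finset.disjoint_left]
  intro v hv hv'
  obtain ⟨D, _, hD⟩ := hP.2 v
  exact hne ((hD C ⟨hC, hv⟩).trans (hD C' ⟨hC', hv'⟩).symm)

lemma subset_unique {P : Finset (Finset V)} (hP : IsPartition P)
    {S C C' : Finset V} (hS : S.Nonempty) (hC : C ∈ P) (hC' : C' ∈ P)
    (h1 : S ⊆ C) (h2 : S ⊆ C') : C = C' := by
  by_contra hne
  obtain ⟨v, hv⟩ := hS
  exact Finset.disjoint_left.1 (part_disjoint hP hC hC' hne) (h1 hv) (h2 hv)

lemma mem_interPartition {P₁ P₂ : Finset (Finset V)} {S : Finset V} :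
    S ∈ interPartition P₁ P₂ ↔ S.Nonempty ∧ ∃ C ∈ P₁, ∃ D ∈ P₂, C ∩ D = S := by
  simp [interPartition, Finset.mem_filter, Finset.mem_image, Finset.mem_product, and_comm]
  aesop

lemma interPartition_isPartition {P₁ P₂ : Finset (Finset V)}
    (hP₁ : IsPartition P₁) (hP₂ : IsPartition P₂) :
    IsPartition (interPartition P₁ P₂) := by
  constructor
  · intro S hS; exact (mem_interPartition.1 hS).1
  · intro v
    obtain ⟨C, ⟨hC, hvC⟩, hCu⟩ := hP₁.2 v
    obtain ⟨D, ⟨hD, hvD⟩, hDu⟩ := hP₂.2 v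
    refine ⟨C ∩ D, ⟨mem_interPartition.2 ⟨⟨v, Finset.mem_inter.2 ⟨hvC, hvD⟩⟩, C, hC, D, hD, rfl⟩,
      Finset.mem_inter.2 ⟨hvC, hvD⟩⟩, ?_⟩
    rintro S ⟨hS, hvS⟩
    obtain ⟨-, C', hC', D', hD', rfl⟩ := mem_interPartition.1 hS
    rw [Finset.mem_inter] at hvS
    rw [hCu C' ⟨hC', hvS.1⟩, hDu D' ⟨hD', hvS.2⟩]

lemma cover₁ {P₁ P₂ : Finset (Finset V)}
    (hP₁ : IsPartition P₁) (hP₂ : IsPartition P₂) {C : Finset V} (hC : C ∈ P₁) :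
    ((interPartition P₁ P₂).filter (· ⊆ C)).biUnion id = C := by
  ext v
  simp only [Finset.mem_biUnion, Finset.mem_filter, id]
  constructor
  · rintro ⟨S, ⟨-, hSC⟩, hvS⟩; exact hSC hvS
  · intro hv
    obtain ⟨D, ⟨hD, hvD⟩, -⟩ := hP₂.2 v
    refine ⟨C ∩ D, ⟨mem_interPartition.2 ⟨⟨v, Finset.mem_inter.2 ⟨hv, hvD⟩⟩, C, hC, D, hD, rfl⟩,
      Finset.inter_subset_left⟩, Finset.mem_inter.2 ⟨hv, hvD⟩⟩

lemma interPartition_comm {P₁ P₂ : Finset (Finset V)} :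
    interPartition P₁ P₂ = interPartition P₂ P₁ := by
  ext S
  rw [mem_interPartition, mem_interPartition]
  constructor <;> rintro ⟨h, C, hC, D, hD, rfl⟩ <;>
    exact ⟨h, D, hD, C, hC, Finset.inter_comm D C⟩

lemma cover₂ {P₁ P₂ : Finset (Finset V)}
    (hP₁ : IsPartition P₁) (hP₂ : IsPartition P₂) {C : Finset V} (hC : C ∈ P₂) :
    ((interPartition P₁ P₂).filter (· ⊆ C)).biUnion id = C := by
  rw [interPartition_comm]; exact cover₁ hP₂ hP₁ hC

lemma sum_over_blocks {P : Finset (Finset V)} (hP : IsPartition P)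
    {C : Finset V} (hcov : (P.filter (· ⊆ C)).biUnion id = C) (f : V → ℝ) :
    ∑ v ∈ C, f v = ∑ S ∈ P.filter (· ⊆ C), ∑ v ∈ S, f v := by
  conv_lhs => rw [← hcov]
  exact Finset.sum_biUnion fun S hS R hR hne =>
    part_disjoint hP (Finset.mem_filter.1 hS).1 (Finset.mem_filter.1 hR).1 hne

lemma sum_card_eq {P : Finset (Finset V)} (hP : IsPartition P) :
    ∑ C ∈ P, (C.card : ℝ) = (Fintype.card V : ℝ) := by
  have huniv : P.biUnion id = Finset.univ := by
    ext v
    simp only [Finset.mem_biUnion, Finset.mem_univ, iff_true, id]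
    obtain ⟨C, ⟨hC, hv⟩, -⟩ := hP.2 v
    exact ⟨C, hC, hv⟩
  have := Finset.card_biUnion (s := P) (t := id)
    (fun S hS R hR hne => part_disjoint hP hS hR hne)
  rw [huniv] at this
  rw [← Nat.cast_sum]
  norm_cast
  simpa [Finset.card_univ] using this.symm

end Aux

/-- **Lemma (difference of quality via the intersection of two partitions).**
`H(P₂) − H(P₁) = (1/2)·Σ_{S ~_{P₂} R, S ≠ R} [E(S,R) − γ·|S|·|R|]
              − (1/2)·Σ_{S ~_{P₁} R, S ≠ R} [E(S,R) − γ·|S|·|R|]`,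
where the sums run over pairs of distinct blocks of `P = P₁ ⊓ P₂` lying in the same
community of `P₂` respectively `P₁`. -/
theorem cpm_diff_via_intersection
    [Fintype V] [DecidableEq V] (G : SimpleGraph V) [DecidableRel G.Adj]
    (γ : ℝ) (hγ : 0 < γ)
    (P₁ P₂ : Finset (Finset V)) (hP₁ : IsPartition P₁) (hP₂ : IsPartition P₂) :
    cpmQuality G γ P₂ - cpmQuality G γ P₁ =
      (1 / 2) * (∑ S ∈ interPartition P₁ P₂, ∑ R ∈ interPartition P₁ P₂,
        if S ≠ R ∧ ∃ C ∈ P₂, S ⊆ C ∧ R ⊆ C then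
          eBetween G S R - γ * (S.card : ℝ) * (R.card : ℝ)
        else 0) -
      (1 / 2) * (∑ S ∈ interPartition P₁ P₂, ∑ R ∈ interPartition P₁ P₂,
        if S ≠ R ∧ ∃ C ∈ P₁, S ⊆ C ∧ R ⊆ C then
          eBetween G S R - γ * (S.card : ℝ) * (R.card : ℝ)
        else 0) := by
  classical
  set P : Finset (Finset V) := interPartition P₁ P₂ with hPdef
  have hPP : IsPartition P := interPartition_isPartition hP₁ hP₂
  set f : Finset V → Finset V → ℝ :=
    fun S R => eBetween G S R - γ * (S.card : ℝ) * (R.card : ℝ) with hf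
  -- decomposition of one community's contribution into blocks
  have hdecomp : ∀ (Q : Finset (Finset V)),
      (∀ C ∈ Q, (P.filter (· ⊆ C)).biUnion id = C) →
      ∀ C ∈ Q, eBetween G C C - γ * (C.card : ℝ) * (C.card : ℝ) =
        ∑ S ∈ P, ∑ R ∈ P, if S ⊆ C ∧ R ⊆ C then f S R else 0 := by
    intro Q hcov C hC
    have hcovC := hcov C hC
    have e1 : eBetween G C C =
        ∑ S ∈ P.filter (· ⊆ C), ∑ R ∈ P.filter (· ⊆ C), eBetween G S R := by
      rw [eBetween, sum_over_blocks hPP hcovC]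
      refine Finset.sum_congr rfl fun S hS => ?_
      calc ∑ u ∈ S, ∑ v ∈ C, (if G.Adj u v then (1:ℝ) else 0)
          = ∑ u ∈ S, ∑ R ∈ P.filter (· ⊆ C), ∑ v ∈ R, (if G.Adj u v then (1:ℝ) else 0) :=
            Finset.sum_congr rfl fun u _ => sum_over_blocks hPP hcovC _
        _ = ∑ R ∈ P.filter (· ⊆ C), ∑ u ∈ S, ∑ v ∈ R, (if G.Adj u v then (1:ℝ) else 0) :=
            Finset.sum_comm
        _ = ∑ R ∈ P.filter (· ⊆ C), eBetween G S R := rfl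
    have ecard : (C.card : ℝ) = ∑ S ∈ P.filter (· ⊆ C), (S.card : ℝ) := by
      have := sum_over_blocks hPP hcovC (fun _ => (1:ℝ))
      simpa using this
    have e3 : eBetween G C C - γ * (C.card : ℝ) * (C.card : ℝ) =
        ∑ S ∈ P.filter (· ⊆ C), ∑ R ∈ P.filter (· ⊆ C), f S R := by
      rw [e1, ecard, mul_assoc, Finset.sum_mul_sum, Finset.mul_sum, ← Finset.sum_sub_distrib]
      refine Finset.sum_congr rfl fun S _ => ?_
      rw [Finset.mul_sum, ← Finset.sum_sub_distrib]
      refine Finset.sum_congr rfl fun R _ => ?_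
      simp only [hf]; ring
    rw [e3, Finset.sum_filter]
    refine Finset.sum_congr rfl fun S _ => ?_
    by_cases h : S ⊆ C
    · rw [if_pos h, Finset.sum_filter]
      exact Finset.sum_congr rfl fun R _ => by simp [h]
    · simp [h]
  -- collapsing the sum over communities containing a fixed pair of blocks
  have hcollapse : ∀ (Q : Finset (Finset V)), IsPartition Q → ∀ S ∈ P, ∀ R ∈ P,
      ∑ C ∈ Q, (if S ⊆ C ∧ R ⊆ C then f S R else 0) =
        if ∃ C ∈ Q, S ⊆ C ∧ R ⊆ C then f S R else 0 := by
    intro Q hQ S hS R hR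
    by_cases hex : ∃ C ∈ Q, S ⊆ C ∧ R ⊆ C
    · obtain ⟨C₀, hC₀, h1, h2⟩ := hex
      rw [if_pos ⟨C₀, hC₀, h1, h2⟩, Finset.sum_eq_single C₀]
      · exact if_pos ⟨h1, h2⟩
      · intro C hC hne
        rw [if_neg]
        rintro ⟨hs, -⟩
        exact hne (subset_unique hQ (hPP.1 S hS) hC hC₀ hs h1)
      · intro h; exact absurd hC₀ h
    · rw [if_neg hex]
      exact Finset.sum_eq_zero fun C hC => if_neg fun ⟨h1, h2⟩ => hex ⟨C, hC, h1, h2⟩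
  have hself₁ : ∀ S ∈ P, ∃ C ∈ P₁, S ⊆ C := by
    intro S hS
    obtain ⟨-, C, hC, D, hD, rfl⟩ := mem_interPartition.1 hS
    exact ⟨C, hC, Finset.inter_subset_left⟩
  have hself₂ : ∀ S ∈ P, ∃ C ∈ P₂, S ⊆ C := by
    intro S hS
    obtain ⟨-, C, hC, D, hD, rfl⟩ := mem_interPartition.1 hS
    exact ⟨D, hD, Finset.inter_subset_right⟩
  -- the main accounting identity for each partition
  have hA : ∀ (Q : Finset (Finset V)), IsPartition Q →
      (∀ C ∈ Q, (P.filter (· ⊆ C)).biUnion id = C) →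
      (∀ S ∈ P, ∃ C ∈ Q, S ⊆ C) →
      ∑ C ∈ Q, (eBetween G C C - γ * (C.card : ℝ) * (C.card : ℝ)) =
        (∑ S ∈ P, ∑ R ∈ P, if S ≠ R ∧ ∃ C ∈ Q, S ⊆ C ∧ R ⊆ C then f S R else 0) +
          ∑ S ∈ P, f S S := by
    intro Q hQ hcov hself
    have step1 : ∑ C ∈ Q, (eBetween G C C - γ * (C.card : ℝ) * (C.card : ℝ)) =
        ∑ S ∈ P, ∑ R ∈ P, if ∃ C ∈ Q, S ⊆ C ∧ R ⊆ C then f S R else 0 := by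
      calc ∑ C ∈ Q, (eBetween G C C - γ * (C.card : ℝ) * (C.card : ℝ))
          = ∑ C ∈ Q, ∑ S ∈ P, ∑ R ∈ P, (if S ⊆ C ∧ R ⊆ C then f S R else 0) :=
            Finset.sum_congr rfl (hdecomp Q hcov)
        _ = ∑ S ∈ P, ∑ C ∈ Q, ∑ R ∈ P, (if S ⊆ C ∧ R ⊆ C then f S R else 0) :=
            Finset.sum_comm
        _ = ∑ S ∈ P, ∑ R ∈ P, ∑ C ∈ Q, (if S ⊆ C ∧ R ⊆ C then f S R else 0) :=
            Finset.sum_congr rfl fun S _ => Finset.sum_comm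
        _ = ∑ S ∈ P, ∑ R ∈ P, if ∃ C ∈ Q, S ⊆ C ∧ R ⊆ C then f S R else 0 :=
            Finset.sum_congr rfl fun S hS =>
              Finset.sum_congr rfl fun R hR => hcollapse Q hQ S hS R hR
    rw [step1, ← Finset.sum_add_distrib]
    refine Finset.sum_congr rfl fun S hS => ?_
    obtain ⟨C, hC, hSC⟩ := hself S hS
    rw [← Finset.sum_erase_add P (fun R => if ∃ C ∈ Q, S ⊆ C ∧ R ⊆ C then f S R else 0) hS,
        ← Finset.sum_erase_add P (fun R => if S ≠ R ∧ ∃ C ∈ Q, S ⊆ C ∧ R ⊆ C then f S R else 0) hS]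
    have hterm : (if ∃ C ∈ Q, S ⊆ C ∧ S ⊆ C then f S S else 0) = f S S :=
      if_pos ⟨C, hC, hSC, hSC⟩
    have h2 : (if S ≠ S ∧ ∃ C ∈ Q, S ⊆ C ∧ S ⊆ C then f S S else 0) = 0 := by simp
    rw [hterm, h2, add_zero]
    refine congrArg (· + f S S) (Finset.sum_congr rfl fun R hR => ?_)
    have hne : S ≠ R := fun h => (Finset.mem_erase.1 hR).1 h.symm
    simp [hne]
  -- rewrite the quality function
  have hH : ∀ (Q : Finset (Finset V)), IsPartition Q →
      cpmQuality G γ Q =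
        (1 / 2) * (∑ C ∈ Q, (eBetween G C C - γ * (C.card : ℝ) * (C.card : ℝ))) +
          γ / 2 * (Fintype.card V : ℝ) := by
    intro Q hQ
    rw [cpmQuality, ← sum_card_eq hQ, Finset.mul_sum, Finset.mul_sum, ← Finset.sum_add_distrib]
    exact Finset.sum_congr rfl fun C _ => by ring
  rw [hH P₂ hP₂, hH P₁ hP₁,
      hA P₂ hP₂ (fun C hC => cover₂ hP₁ hP₂ hC) hself₂,
      hA P₁ hP₁ (fun C hC => cover₁ hP₁ hP₂ hC) hself₁]
  ring
end

section
/- Let G = (V,E) be a finite undirected graph, let γ > 0, and let P* be an optimal partition of V for the CPM quality function with resolution parameter γ. Then every community C ∈ P* induces a connected subgraph of G. -/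
/-! If a community `C` of a partition splits as `S ⊔ T` with no edge between `S` and `T`, then
replacing `C` by `S` and `T` keeps the number of internal edges and lowers the penalty
`γ·|C|(|C|−1)/2` by `γ·|S|·|T| > 0`, so the partition was not optimal. A disconnected induced
subgraph yields such a split: take for `S` the vertices reachable from one vertex inside `C`. -/

open Finset

variable {V : Type*}

section Quality

variable (G : SimpleGraph V) [DecidableRel G.Adj] (γ : ℝ)

noncomputable def cpmCommunityQuality (C : Finset V) : ℝ :=
  eBetween G C C / 2 - γ * (C.card : ℝ) * ((C.card : ℝ) - 1) / 2

lemma eBetween_union_union [DecidableEq V] {S T : Finset V} (h : Disjoint S T) :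
    eBetween G (S ∪ T) (S ∪ T) =
      eBetween G S S + eBetween G S T + eBetween G T S + eBetween G T T := by
  simp only [eBetween, sum_union h, sum_add_distrib]
  ring

lemma eBetween_eq_zero_of_forall_not_adj {S T : Finset V}
    (h : ∀ u ∈ S, ∀ v ∈ T, ¬G.Adj u v) : eBetween G S T = 0 :=
  sum_eq_zero fun u hu => sum_eq_zero fun v hv => if_neg (h u hu v hv)

lemma cpmCommunityQuality_union [DecidableEq V] {S T : Finset V} (hST : Disjoint S T)
    (hcut : ∀ u ∈ S, ∀ v ∈ T, ¬G.Adj u v) :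
    cpmCommunityQuality G γ (S ∪ T) =
      cpmCommunityQuality G γ S + cpmCommunityQuality G γ T - γ * S.card * T.card := by
  have hST₀ := eBetween_eq_zero_of_forall_not_adj G hcut
  have hTS₀ := eBetween_eq_zero_of_forall_not_adj G fun v hv u hu huv => hcut u hu v hv huv.symm
  rw [cpmCommunityQuality, cpmCommunityQuality, cpmCommunityQuality,
    eBetween_union_union G hST, hST₀, hTS₀, card_union_of_disjoint hST]
  push_cast
  ring

end Quality

section Partition

variable {P : Finset (Finset V)} {C D S : Finset V}

lemma IsPartition.eq_of_subset [Fintype V] (hP : IsPartition P) (hD : D ∈ P) (hC : C ∈ P)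
    (hDne : D.Nonempty) (hDC : D ⊆ C) : D = C := by
  obtain ⟨v, hv⟩ := hDne
  exact (hP.2 v).unique ⟨hD, hv⟩ ⟨hC, hDC hv⟩

variable [DecidableEq V]

def splitCommunity (P : Finset (Finset V)) (C S : Finset V) : Finset (Finset V) :=
  insert S (insert (C \ S) (P.erase C))

lemma mem_splitCommunity {E : Finset V} :
    E ∈ splitCommunity P C S ↔ E = S ∨ E = C \ S ∨ (E ≠ C ∧ E ∈ P) := by
  simp only [splitCommunity, mem_insert, mem_erase]

variable [Fintype V]

lemma isPartition_splitCommunity (hP : IsPartition P) (hC : C ∈ P) (hSC : S ⊆ C)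
    (hS : S.Nonempty) (hCS : (C \ S).Nonempty) : IsPartition (splitCommunity P C S) := by
  refine ⟨fun E hE => ?_, fun v => ?_⟩
  · rcases mem_splitCommunity.1 hE with rfl | rfl | ⟨-, hEP⟩
    exacts [hS, hCS, hP.1 E hEP]
  have hother {E : Finset V} (hEP : E ∈ P) (hvE : v ∈ E) (hvC : v ∈ C) : E = C :=
    (hP.2 v).unique ⟨hEP, hvE⟩ ⟨hC, hvC⟩
  by_cases hvS : v ∈ S
  · refine ⟨S, ⟨mem_splitCommunity.2 (Or.inl rfl), hvS⟩, fun E ⟨hE, hvE⟩ => ?_⟩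
    rcases mem_splitCommunity.1 hE with rfl | rfl | ⟨hEC, hEP⟩
    · rfl
    · exact absurd hvS (mem_sdiff.1 hvE).2
    · exact absurd (hother hEP hvE (hSC hvS)) hEC
  by_cases hvC : v ∈ C
  · refine ⟨C \ S, ⟨mem_splitCommunity.2 (Or.inr (Or.inl rfl)), mem_sdiff.2 ⟨hvC, hvS⟩⟩,
      fun E ⟨hE, hvE⟩ => ?_⟩
    rcases mem_splitCommunity.1 hE with rfl | rfl | ⟨hEC, hEP⟩
    · exact absurd hvE hvS
    · rfl
    · exact absurd (hother hEP hvE hvC) hEC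
  obtain ⟨D, ⟨hDP, hvD⟩, hDuniq⟩ := hP.2 v
  have hDC : D ≠ C := fun h => hvC (h ▸ hvD)
  refine ⟨D, ⟨mem_splitCommunity.2 (Or.inr (Or.inr ⟨hDC, hDP⟩)), hvD⟩,
    fun E ⟨hE, hvE⟩ => ?_⟩
  rcases mem_splitCommunity.1 hE with rfl | rfl | ⟨-, hEP⟩
  · exact absurd hvE hvS
  · exact absurd (mem_sdiff.1 hvE).1 hvC
  · exact hDuniq E ⟨hEP, hvE⟩

lemma cpmQuality_splitCommunity (G : SimpleGraph V) [DecidableRel G.Adj] (γ : ℝ)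
    (hP : IsPartition P) (hC : C ∈ P) (hSC : S ⊆ C) (hS : S.Nonempty)
    (hCS : (C \ S).Nonempty) :
    cpmQuality G γ (splitCommunity P C S) = cpmQuality G γ P - cpmCommunityQuality G γ C +
      cpmCommunityQuality G γ S + cpmCommunityQuality G γ (C \ S) := by
  have hS_ne_CS : S ≠ C \ S := fun h => by
    obtain ⟨v, hv⟩ := hS
    exact (mem_sdiff.1 (h ▸ hv)).2 hv
  have hS_notMem : S ∉ P.erase C := fun h => by
    obtain ⟨v, hv⟩ := hCS
    exact (mem_sdiff.1 hv).2
      ((hP.eq_of_subset (mem_of_mem_erase h) hC hS hSC).symm ▸ (mem_sdiff.1 hv).1)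
  have hCS_notMem : C \ S ∉ P.erase C := fun h => by
    obtain ⟨v, hv⟩ := hS
    have hCS_eq := hP.eq_of_subset (mem_of_mem_erase h) hC hCS sdiff_subset
    exact (mem_sdiff.1 (hCS_eq.symm ▸ hSC hv)).2 hv
  have hS_notMem' : S ∉ insert (C \ S) (P.erase C) := by
    rw [mem_insert, not_or]
    exact ⟨hS_ne_CS, hS_notMem⟩
  rw [splitCommunity, cpmQuality, sum_insert hS_notMem', sum_insert hCS_notMem, cpmQuality,
    ← add_sum_erase _ _ hC]
  simp only [cpmCommunityQuality]
  ring

end Partition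

lemma exists_cut_of_not_connected_induce [DecidableEq V] (G : SimpleGraph V) {C : Finset V}
    (hC : C.Nonempty) (h : ¬(G.induce (C : Set V)).Connected) :
    ∃ S ⊆ C, S.Nonempty ∧ (C \ S).Nonempty ∧ ∀ u ∈ S, ∀ v ∈ C \ S, ¬G.Adj u v := by
  classical
  set H := G.induce (C : Set V)
  have : Nonempty (C : Set V) := hC.coe_sort
  obtain ⟨a, b, hab⟩ : ∃ a b, ¬H.Reachable a b := by
    by_contra! hreach
    exact h ⟨hreach⟩
  set S := C.filter fun u => ∃ hu : u ∈ C, H.Reachable a ⟨u, hu⟩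
  have hclosed : ∀ u ∈ S, ∀ v ∈ C, G.Adj u v → v ∈ S := by
    intro u hu v hv huv
    obtain ⟨-, _, hau⟩ := mem_filter.1 hu
    exact mem_filter.2 ⟨hv, hv, hau.trans (SimpleGraph.Adj.reachable huv)⟩
  refine ⟨S, filter_subset _ _, ⟨a, mem_filter.2 ⟨a.2, a.2, .rfl⟩⟩,
    ⟨b, mem_sdiff.2 ⟨b.2, fun hb => hab (mem_filter.1 hb).2.choose_spec⟩⟩,
    fun u hu v hv huv => (mem_sdiff.1 hv).2 (hclosed u hu v (mem_sdiff.1 hv).1 huv)⟩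

/-- **Theorem.** Every community of an optimal CPM partition (with resolution parameter
`γ > 0`) induces a connected subgraph. -/
theorem optimal_partition_communities_connected
    [Fintype V] [DecidableEq V] (G : SimpleGraph V) [DecidableRel G.Adj]
    (γ : ℝ) (hγ : 0 < γ)
    (Pstar : Finset (Finset V)) (hPstar : IsPartition Pstar)
    (hopt : ∀ P : Finset (Finset V), IsPartition P →
      cpmQuality G γ P ≤ cpmQuality G γ Pstar) :
    ∀ C ∈ Pstar, (G.induce (↑C : Set V)).Connected := by
  intro C hC
  by_contra hdisconn
  obtain ⟨S, hSC, hS, hCS, hcut⟩ :=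
    exists_cut_of_not_connected_induce G (hPstar.1 C hC) hdisconn
  have hsplit := hopt _ (isPartition_splitCommunity hPstar hC hSC hS hCS)
  rw [cpmQuality_splitCommunity G γ hPstar hC hSC hS hCS] at hsplit
  have hmerge := cpmCommunityQuality_union G γ disjoint_sdiff hcut
  rw [union_sdiff_of_subset hSC] at hmerge
  have hgain : 0 < γ * S.card * (C \ S).card := by
    have := hS.card_pos
    have := hCS.card_pos
    positivity
  linarith
end
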